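/- Let 𝔻 be a relative entropy. Define H by H(p) := log n − 𝔻(p‖u_n) for every n ∈ ℕ and p ∈ P(n), where u_n ∈ P(n) is the uniform vector. Then H is an entropy: it takes values in [0,∞), it satisfies H(p) ≤ H(p') whenever p ≽ p' (across possibly different dimensions), it is additive for Kronecker products, and H(u_2) = log 2. -/

import Mathlib

/-!
Write `fₙ = 𝔻(e₁‖uₙ)`. Every `p ∈ P(n)` is the image of `e₁` under a channel fixing `uₙ`,
so `𝔻(p‖uₙ) ≤ fₙ`. The function `f` is monotone in `n`, additive on products and `f₂ = 1`,
which forces `fₙ = log n`; hence `0 ≤ H(p) < ∞`. Additivity of `H` is additivity of `𝔻`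
together with `uₙ ⊗ uₘ = uₙₘ`.

For monotonicity, pad `p ∈ P(n)` and `p' ∈ P(m)` to `p ⊗ e₁` and `e₁ ⊗ p'` in dimension
`nm`, where majorisation is preserved. By Hardy–Littlewood–Pólya there is a channel between
them fixing the uniform vector: `e₁ ⊗ p'` cannot be separated from the convex hull of the
permutations of `p ⊗ e₁` (Abel summation), and Birkhoff's theorem turns the convex combination
into a doubly stochastic matrix. Data processing and additivity then give `H(p) ≤ H(p')`.
-/

open scoped BigOperators ENNReal

/-- A probability vector: nonnegative entries summing to 1. -/
def IsProbVec {n : ℕ} (p : Fin n → ℝ) : Prop :=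
  (∀ i, 0 ≤ p i) ∧ ∑ i, p i = 1

/-- The uniform probability vector on `n` outcomes. -/
noncomputable def uniform (n : ℕ) : Fin n → ℝ := fun _ => (n : ℝ)⁻¹

/-- Kronecker (tensor) product of two vectors. -/
noncomputable def kron {n m : ℕ} (p : Fin n → ℝ) (q : Fin m → ℝ) : Fin (n * m) → ℝ :=
  fun i => p (finProdFinEquiv.symm i).1 * q (finProdFinEquiv.symm i).2

/-- Sum of the `k` largest entries (for vectors with nonnegative entries):
the supremum of sums over subsets of at most `k` indices. -/
noncomputable def maxPartialSum {n : ℕ} (p : Fin n → ℝ) (k : ℕ) : ℝ :=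
  sSup { x | ∃ s : Finset (Fin n), s.card ≤ k ∧ ∑ i ∈ s, p i = x }

/-- `p` majorises `q`: every partial sum of the `k` largest entries of `p`
dominates that of `q` (entries beyond a vector's length count as 0). -/
def Majorizes {n m : ℕ} (p : Fin n → ℝ) (q : Fin m → ℝ) : Prop :=
  ∀ k : ℕ, maxPartialSum q k ≤ maxPartialSum p k

/-- A channel: an `n × m` row-stochastic matrix. -/
def IsStochastic {n m : ℕ} (W : Matrix (Fin n) (Fin m) ℝ) : Prop :=
  (∀ i j, 0 ≤ W i j) ∧ ∀ i, ∑ j, W i j = 1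

/-- Relative majorisation of pairs: some channel maps `(p, q)` to `(p', q')`. -/
def RelMaj {n m : ℕ} (p q : Fin n → ℝ) (p' q' : Fin m → ℝ) : Prop :=
  ∃ W : Matrix (Fin n) (Fin m) ℝ, IsStochastic W ∧
    Matrix.vecMul p W = p' ∧ Matrix.vecMul q W = q'

/-- An entropy: a `[0,∞)`-valued function on probability vectors of all finite dimensions
that is monotone under mixing (majorisation), additive for Kronecker products,
and normalised so that `H(u₂) = log 2` (binary logarithm). -/
structure IsEntropy (H : (n : ℕ) → (Fin n → ℝ) → ℝ) : Prop where
  nonneg : ∀ {n : ℕ} (p : Fin n → ℝ), IsProbVec p → 0 ≤ H n p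
  mono : ∀ {n m : ℕ} (p : Fin n → ℝ) (p' : Fin m → ℝ),
    IsProbVec p → IsProbVec p' → Majorizes p p' → H n p ≤ H m p'
  additive : ∀ {n m : ℕ} (p : Fin n → ℝ) (q : Fin m → ℝ),
    IsProbVec p → IsProbVec q → H (n * m) (kron p q) = H n p + H m q
  normalized : H 2 (uniform 2) = Real.logb 2 2

/-- A monotone divergence: a `[0,∞]`-valued function on pairs of probability vectors of
equal finite dimension satisfying the data-processing inequality and `𝔻(1‖1) = 0`. -/
structure IsMonotoneDivergence (D : (n : ℕ) → (Fin n → ℝ) → (Fin n → ℝ) → ℝ≥0∞) : Prop where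
  dpi : ∀ {n m : ℕ} (p q : Fin n → ℝ) (p' q' : Fin m → ℝ),
    IsProbVec p → IsProbVec q → IsProbVec p' → IsProbVec q' →
    RelMaj p q p' q' → D m p' q' ≤ D n p q
  normalized : D 1 (fun _ => 1) (fun _ => 1) = 0

/-- A relative entropy: data-processing inequality, additivity for Kronecker products,
and the normalisation `𝔻(e₁‖u₂) = log 2` (binary logarithm). -/
structure IsRelativeEntropy (D : (n : ℕ) → (Fin n → ℝ) → (Fin n → ℝ) → ℝ≥0∞) : Prop where
  dpi : ∀ {n m : ℕ} (p q : Fin n → ℝ) (p' q' : Fin m → ℝ),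
    IsProbVec p → IsProbVec q → IsProbVec p' → IsProbVec q' →
    RelMaj p q p' q' → D m p' q' ≤ D n p q
  additive : ∀ {n m : ℕ} (p₁ q₁ : Fin n → ℝ) (p₂ q₂ : Fin m → ℝ),
    IsProbVec p₁ → IsProbVec q₁ → IsProbVec p₂ → IsProbVec q₂ →
    D (n * m) (kron p₁ p₂) (kron q₁ q₂) = D n p₁ q₁ + D m p₂ q₂
  normalized : D 2 ![1, 0] ![1/2, 1/2] = ENNReal.ofReal (Real.logb 2 2)

open Finset Matrix

def e₁ (n : ℕ) : Fin n → ℝ := fun i => if (i : ℕ) = 0 then 1 else 0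

section ProbVec

variable {n m : ℕ}

lemma IsProbVec.pos {p : Fin n → ℝ} (hp : IsProbVec p) : 0 < n := by
  rcases Nat.eq_zero_or_pos n with rfl | hn
  · simpa using hp.2
  · exact hn

lemma IsProbVec.le_one {p : Fin n → ℝ} (hp : IsProbVec p) (i : Fin n) : p i ≤ 1 :=
  hp.2 ▸ single_le_sum (fun j _ => hp.1 j) (mem_univ i)

lemma isProbVec_uniform (hn : 0 < n) : IsProbVec (uniform n) :=
  ⟨fun _ => by unfold uniform; positivity, by simp [uniform, hn.ne']⟩

lemma e₁_eq_ite (hn : 0 < n) (i : Fin n) : e₁ n i = if i = ⟨0, hn⟩ then 1 else 0 := by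
  simp only [e₁, Fin.ext_iff]

lemma isProbVec_e₁ (hn : 0 < n) : IsProbVec (e₁ n) :=
  ⟨fun i => by unfold e₁; split <;> norm_num, by simp [e₁_eq_ite hn]⟩

lemma sum_kron (p : Fin n → ℝ) (q : Fin m → ℝ) :
    ∑ i, kron p q i = (∑ i, p i) * ∑ j, q j := by
  rw [← Equiv.sum_comp finProdFinEquiv, Fintype.sum_prod_type, sum_mul_sum]
  simp [kron]

lemma isProbVec_kron {p : Fin n → ℝ} {q : Fin m → ℝ} (hp : IsProbVec p) (hq : IsProbVec q) :
    IsProbVec (kron p q) :=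
  ⟨fun _ => mul_nonneg (hp.1 _) (hq.1 _), by rw [sum_kron, hp.2, hq.2, one_mul]⟩

lemma kron_uniform (n m : ℕ) : kron (uniform n) (uniform m) = uniform (n * m) := by
  ext i
  simp [kron, uniform, mul_comm]

lemma kron_e₁ (n m : ℕ) : kron (e₁ n) (e₁ m) = e₁ (n * m) := by
  ext i
  obtain ⟨⟨a, b⟩, rfl⟩ := finProdFinEquiv.surjective i
  have hm : m ≠ 0 := Nat.pos_iff_ne_zero.1 (Nat.zero_lt_of_lt b.isLt)
  by_cases ha : (a : ℕ) = 0 <;> by_cases hb : (b : ℕ) = 0 <;> simp [kron, e₁, ha, hb, hm]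

lemma e₁_one : e₁ 1 = uniform 1 := by
  ext i
  simp [e₁, uniform]

lemma vecMul_e₁ {k : ℕ} (hn : 0 < n) (W : Matrix (Fin n) (Fin k) ℝ) :
    e₁ n ᵥ* W = W ⟨0, hn⟩ := by
  ext j
  simp [vecMul, dotProduct, e₁_eq_ite hn]

end ProbVec

section Channels

variable {n m : ℕ}

lemma relMaj_const {p q : Fin n → ℝ} {r : Fin m → ℝ} (hp : IsProbVec p) (hq : IsProbVec q)
    (hr : IsProbVec r) : RelMaj p q r r := by
  refine ⟨fun _ j => r j, ⟨fun _ j => hr.1 j, fun _ => hr.2⟩, ?_, ?_⟩ <;>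
    ext j <;> simp [vecMul, dotProduct, ← sum_mul, hp.2, hq.2]

/-- Rows `i ≠ 0` are `(m • uₙ - r) / (m - 1)`, so that the rows average to `uₙ`. -/
lemma relMaj_e₁_uniform (hm : 2 ≤ m) {r : Fin n → ℝ} (hr : IsProbVec r)
    (hrm : ∀ j, r j ≤ m / n) : RelMaj (e₁ m) (uniform m) r (uniform n) := by
  obtain ⟨k, rfl⟩ : ∃ k, m = k + 1 := ⟨m - 1, by omega⟩
  have hk : (0 : ℝ) < k := by norm_cast; omega
  have hn : (n : ℝ) ≠ 0 := by exact_mod_cast hr.pos.ne'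
  set W : Matrix (Fin (k + 1)) (Fin n) ℝ :=
    fun i j => if (i : ℕ) = 0 then r j else ((k + 1 : ℕ) / n - r j) / k
  have hcol (j : Fin n) : ∑ i, W i j = (k + 1 : ℕ) / n := by
    simp only [W, Fin.sum_univ_succ, Fin.val_zero, Fin.val_succ, if_true, Nat.succ_ne_zero,
      if_false, sum_const, card_univ, Fintype.card_fin, nsmul_eq_mul]
    field_simp
    ring
  refine ⟨W, ⟨fun i j => ?_, fun i => ?_⟩, vecMul_e₁ k.succ_pos W, ?_⟩
  · simp only [W]
    split
    · exact hr.1 j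
    · exact div_nonneg (sub_nonneg.2 (hrm j)) hk.le
  · simp only [W]
    split
    · exact hr.2
    · rw [← sum_div, sum_sub_distrib, hr.2]
      simp [field]
  · ext j
    simp [vecMul, dotProduct, uniform, ← mul_sum, hcol, field]

lemma relMaj_uniform_of_mem_doublyStochastic {a : Fin n → ℝ} {W : Matrix (Fin n) (Fin n) ℝ}
    (hW : W ∈ doublyStochastic ℝ (Fin n)) : RelMaj a (uniform n) (a ᵥ* W) (uniform n) := by
  refine ⟨W, ⟨fun _ _ => nonneg_of_mem_doublyStochastic hW,
    sum_row_of_mem_doublyStochastic hW⟩, rfl, ?_⟩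
  ext j
  simp [vecMul, dotProduct, uniform, ← mul_sum, sum_col_of_mem_doublyStochastic hW]

end Channels

section MaxPartialSum

variable {n N : ℕ}

lemma sum_le_maxPartialSum (p : Fin n → ℝ) {k : ℕ} {s : Finset (Fin n)} (hs : #s ≤ k) :
    ∑ i ∈ s, p i ≤ maxPartialSum p k := by
  refine le_csSup ?_ ⟨s, hs, rfl⟩
  refine (Set.finite_range fun t : Finset (Fin n) => ∑ i ∈ t, p i).bddAbove.mono ?_
  rintro _ ⟨t, -, rfl⟩
  exact ⟨t, rfl⟩

lemma maxPartialSum_le {p : Fin n → ℝ} {k : ℕ} {M : ℝ}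
    (h : ∀ s : Finset (Fin n), #s ≤ k → ∑ i ∈ s, p i ≤ M) : maxPartialSum p k ≤ M :=
  csSup_le ⟨0, ∅, by simp⟩ (by rintro _ ⟨s, hs, rfl⟩; exact h s hs)

lemma maxPartialSum_eq_of_embedding {p : Fin n → ℝ} {q : Fin N → ℝ} (ι : Fin n ↪ Fin N)
    (hpq : ∀ x, q (ι x) = p x) (hq : ∀ i, i ∉ Set.range ι → q i = 0) (k : ℕ) :
    maxPartialSum q k = maxPartialSum p k := by
  classical
  refine le_antisymm (maxPartialSum_le fun s hs => ?_) (maxPartialSum_le fun t ht => ?_)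
  · have hcard : #(s.preimage ι ι.injective.injOn) ≤ k :=
      (card_le_card_of_injOn ι (fun x hx => mem_preimage.1 hx) ι.injective.injOn).trans hs
    calc ∑ i ∈ s, q i = ∑ x ∈ s.preimage ι ι.injective.injOn, p x := by
          rw [← sum_preimage ι s ι.injective.injOn q fun i _ hi => hq i hi]
          exact sum_congr rfl fun x _ => hpq x
      _ ≤ maxPartialSum p k := sum_le_maxPartialSum p hcard
  · calc ∑ x ∈ t, p x = ∑ i ∈ t.map ι, q i := by simp [hpq]
      _ ≤ maxPartialSum q k := sum_le_maxPartialSum q (by rwa [card_map])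

lemma maxPartialSum_kron_e₁ {m : ℕ} (p : Fin n → ℝ) (hm : 0 < m) (k : ℕ) :
    maxPartialSum (kron p (e₁ m)) k = maxPartialSum p k := by
  refine maxPartialSum_eq_of_embedding
    ((Function.Embedding.sectL _ ⟨0, hm⟩).trans finProdFinEquiv.toEmbedding)
    (fun x => by simp [kron, e₁]) (fun i hi => ?_) k
  obtain ⟨⟨x, y⟩, rfl⟩ := finProdFinEquiv.surjective i
  have hy : (y : ℕ) ≠ 0 := fun hy => hi ⟨x, by simp [Fin.ext_iff, hy]⟩
  simp [kron, e₁, hy]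

lemma maxPartialSum_e₁_kron {m : ℕ} (p : Fin m → ℝ) (hn : 0 < n) (k : ℕ) :
    maxPartialSum (kron (e₁ n) p) k = maxPartialSum p k := by
  refine maxPartialSum_eq_of_embedding
    ((Function.Embedding.sectR ⟨0, hn⟩ _).trans finProdFinEquiv.toEmbedding)
    (fun y => by simp [kron, e₁]) (fun i hi => ?_) k
  obtain ⟨⟨x, y⟩, rfl⟩ := finProdFinEquiv.surjective i
  have hx : (x : ℕ) ≠ 0 := fun hx => hi ⟨y, by simp [Fin.ext_iff, hx]⟩
  simp [kron, e₁, hx]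

end MaxPartialSum

section Majorization

variable {N : ℕ}

lemma exists_perm_antitone {α : Type*} [LinearOrder α] (c : Fin N → α) :
    ∃ σ : Equiv.Perm (Fin N), Antitone (c ∘ σ) :=
  ⟨Tuple.sort (OrderDual.toDual ∘ c), monotone_toDual_comp_iff.1 (Tuple.monotone_sort _)⟩

lemma sum_le_sum_of_card_le_of_forall_sdiff_le {ι : Type*} [DecidableEq ι] {q : ι → ℝ}
    {s t : Finset ι} (hq : ∀ i, 0 ≤ q i) (hst : #s ≤ #t)
    (hle : ∀ i ∈ s \ t, ∀ j ∈ t \ s, q i ≤ q j) : ∑ i ∈ s, q i ≤ ∑ i ∈ t, q i := by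
  rw [← sub_nonneg, ← sum_sdiff_sub_sum_sdiff, sub_nonneg]
  rcases (s \ t).eq_empty_or_nonempty with h | h
  · rw [h, sum_empty]
    exact sum_nonneg fun i _ => hq i
  set M := (s \ t).sup' h q
  calc ∑ i ∈ s \ t, q i ≤ #(s \ t) • M := sum_le_card_nsmul _ _ _ fun i hi => le_sup' q hi
    _ ≤ #(t \ s) • M := nsmul_le_nsmul_left ((hq _).trans (le_sup' q h.choose_spec))
        (card_sdiff_le_card_sdiff_iff.2 hst)
    _ ≤ ∑ j ∈ t \ s, q j :=
        card_nsmul_le_sum _ _ _ fun j hj => sup'_le h q fun i hi => hle i hi j hj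

lemma sum_le_sum_take_of_antitone {q : Fin N → ℝ} (hq : Antitone q) (hq0 : ∀ i, 0 ≤ q i)
    {k : ℕ} (hk : k ≤ N) {s : Finset (Fin N)} (hs : #s ≤ k) :
    ∑ i ∈ s, q i ≤ ∑ i, Fin.take k hk q i := by
  classical
  have htake : ∑ i, Fin.take k hk q i = ∑ i ∈ univ.map (Fin.castLEEmb hk), q i := by
    simp [Fin.take]
  rw [htake]
  refine sum_le_sum_of_card_le_of_forall_sdiff_le hq0 (by simpa using hs) fun i hi j hj => hq ?_
  simp only [mem_sdiff, mem_map, mem_univ, true_and, Fin.castLEEmb_apply, not_exists] at hi hj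
  obtain ⟨j, rfl⟩ := hj.1
  by_contra! hij
  exact hi.2 ⟨i, (Fin.lt_def.1 hij).trans j.isLt⟩ (Fin.ext rfl)

/-- Abel summation, with an arbitrary lower bound `t` of `c` in place of its last entry. -/
lemma mul_sum_le_sum_mul_of_antitone : ∀ {N : ℕ} {c d : Fin N → ℝ} {t : ℝ}, Antitone c →
    (∀ i, t ≤ c i) → (∀ k (hk : k ≤ N), 0 ≤ ∑ i, Fin.take k hk d i) →
    t * ∑ i, d i ≤ ∑ i, c i * d i
  | 0, _, _, _, _, _, _ => by simp
  | N + 1, c, d, t, hc, ht, hd => by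
    have ih : c (Fin.last N) * ∑ i : Fin N, d i.castSucc ≤
        ∑ i : Fin N, c i.castSucc * d i.castSucc :=
      mul_sum_le_sum_mul_of_antitone (hc.comp_monotone Fin.strictMono_castSucc.monotone)
        (fun i => hc (Fin.le_last _)) fun k hk => hd k (hk.trans N.le_succ)
    have htot : 0 ≤ ∑ i, d i := by simpa [Fin.take] using hd (N + 1) le_rfl
    simp only [Fin.sum_univ_castSucc] at htot ⊢
    nlinarith [mul_le_mul_of_nonneg_right (ht (Fin.last N)) htot]

lemma sum_mul_le_sum_mul_of_take_le {c x y : Fin N → ℝ} (hc : Antitone c)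
    (hxy : ∀ k (hk : k ≤ N), ∑ i, Fin.take k hk x i ≤ ∑ i, Fin.take k hk y i)
    (hsum : ∑ i, x i = ∑ i, y i) : ∑ i, c i * x i ≤ ∑ i, c i * y i := by
  cases N with
  | zero => simp
  | succ N =>
    have h := mul_sum_le_sum_mul_of_antitone (d := y - x) hc (fun i => hc (Fin.le_last i))
      fun k hk => by simpa [Fin.take, sum_sub_distrib] using hxy k hk
    simp only [Pi.sub_apply, sum_sub_distrib, hsum, sub_self, mul_zero, mul_sub] at h
    linarith

lemma exists_perm_sum_mul_le {a b : Fin N → ℝ} (ha : ∀ i, 0 ≤ a i)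
    (hsum : ∑ i, b i = ∑ i, a i) (hab : Majorizes a b) (c : Fin N → ℝ) :
    ∃ σ : Equiv.Perm (Fin N), ∑ i, b i * c i ≤ ∑ i, a (σ i) * c i := by
  obtain ⟨τ, hτ⟩ := exists_perm_antitone c
  obtain ⟨α, hα⟩ := exists_perm_antitone a
  have htake (k : ℕ) (hk : k ≤ N) :
      ∑ i, Fin.take k hk (b ∘ τ) i ≤ ∑ i, Fin.take k hk (a ∘ α) i := by
    calc ∑ i, Fin.take k hk (b ∘ τ) i
        = ∑ j ∈ univ.map ((Fin.castLEEmb hk).trans τ.toEmbedding), b j := by simp [Fin.take]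
      _ ≤ maxPartialSum b k := sum_le_maxPartialSum b (by simp)
      _ ≤ maxPartialSum a k := hab k
      _ ≤ _ := maxPartialSum_le fun s hs => ?_
    calc ∑ i ∈ s, a i = ∑ i ∈ s.map α.symm.toEmbedding, (a ∘ α) i := by simp
      _ ≤ _ := sum_le_sum_take_of_antitone hα (fun i => ha _) hk (by simpa using hs)
  refine ⟨τ.symm.trans α, ?_⟩
  calc ∑ i, b i * c i = ∑ i, (c ∘ τ) i * (b ∘ τ) i := by
        rw [← Equiv.sum_comp τ]; simp [mul_comm]
    _ ≤ ∑ i, (c ∘ τ) i * (a ∘ α) i :=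
        sum_mul_le_sum_mul_of_take_le hτ htake (by simp [Equiv.sum_comp, hsum])
    _ = ∑ i, a ((τ.symm.trans α) i) * c i := by
        rw [← Equiv.sum_comp τ fun i => a ((τ.symm.trans α) i) * c i]; simp [mul_comm]

lemma mem_convexHull_range_comp_perm {a b : Fin N → ℝ} (ha : ∀ i, 0 ≤ a i)
    (hsum : ∑ i, b i = ∑ i, a i) (hab : Majorizes a b) :
    b ∈ convexHull ℝ (Set.range fun σ : Equiv.Perm (Fin N) => a ∘ σ) := by
  by_contra hb
  obtain ⟨f, u, hfu, huf⟩ := geometric_hahn_banach_closed_point (convex_convexHull ℝ _)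
    ((Set.finite_range _).isCompact_convexHull (𝕜 := ℝ)).isClosed hb
  have hf (v : Fin N → ℝ) : f v = ∑ i, v i * f (fun j => if i = j then 1 else 0) :=
    f.toLinearMap.pi_apply_eq_sum_univ v
  obtain ⟨σ, hσ⟩ :=
    exists_perm_sum_mul_le ha hsum hab fun i => f fun j => if i = j then 1 else 0
  have hσu := hfu (a ∘ σ) (subset_convexHull ℝ _ ⟨σ, rfl⟩)
  rw [hf] at hσu huf
  exact (hσ.trans_lt hσu).not_gt huf

lemma exists_mem_doublyStochastic_vecMul_eq {a b : Fin N → ℝ} (ha : ∀ i, 0 ≤ a i)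
    (hsum : ∑ i, b i = ∑ i, a i) (hab : Majorizes a b) :
    ∃ W ∈ doublyStochastic ℝ (Fin N), a ᵥ* W = b := by
  have hrange : (Set.range fun σ : Equiv.Perm (Fin N) => a ∘ σ)
      = vecMulBilin ℝ ℝ a '' {σ.permMatrix ℝ | σ : Equiv.Perm (Fin N)} := by
    ext v
    constructor
    · rintro ⟨σ, rfl⟩
      exact ⟨σ⁻¹.permMatrix ℝ, ⟨σ⁻¹, rfl⟩, by simp [vecMul_permMatrix, Equiv.Perm.inv_def]⟩
    · rintro ⟨_, ⟨σ, rfl⟩, rfl⟩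
      exact ⟨σ⁻¹, by simp [vecMul_permMatrix]⟩
  have hb := mem_convexHull_range_comp_perm ha hsum hab
  rwa [hrange, ← LinearMap.image_convexHull, ← doublyStochastic_eq_convexHull_permMatrix] at hb

end Majorization

section LogbCharacterization

variable {g : ℕ → ℝ}

lemma natLog_le_mul_le_of_map_mul (hmul : ∀ m n, 0 < m → 0 < n → g (m * n) = g m + g n)
    (hmono : ∀ m n, 0 < m → m ≤ n → g m ≤ g n) (h2 : g 2 = 1) {n : ℕ} (hn : 0 < n) (k : ℕ) :
    (Nat.log 2 (n ^ k) : ℝ) ≤ k * g n ∧ k * g n ≤ Nat.log 2 (n ^ k) + 1 := by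
  have hpow {m : ℕ} (hm : 0 < m) (j : ℕ) : g (m ^ j) = j * g m := by
    induction j with
    | zero => simpa using hmul 1 1 one_pos one_pos
    | succ j ih => rw [pow_succ, hmul _ _ (pow_pos hm j) hm, ih]; push_cast; ring
  have hlow := hmono _ _ (pow_pos two_pos _) (Nat.pow_log_le_self 2 (pow_pos hn k).ne')
  have hup := hmono _ _ (pow_pos hn k) (Nat.lt_pow_succ_log_self one_lt_two (n ^ k)).le
  rw [hpow two_pos, hpow hn, h2, mul_one] at hlow hup
  exact ⟨hlow, by exact_mod_cast hup⟩

/-- Both `g` and `logb 2` are pinned between `⌊log₂ nᵏ⌋` and `⌊log₂ nᵏ⌋ + 1` after scaling by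
`k`, so they differ by at most `1 / k` at `n`. -/
lemma eq_logb_of_map_mul (hmul : ∀ m n, 0 < m → 0 < n → g (m * n) = g m + g n)
    (hmono : ∀ m n, 0 < m → m ≤ n → g m ≤ g n) (h2 : g 2 = 1) {n : ℕ} (hn : 0 < n) :
    g n = Real.logb 2 n := by
  have hlogb := natLog_le_mul_le_of_map_mul (g := fun m => Real.logb 2 m)
    (fun m n hm hn => by push_cast; exact Real.logb_mul (by positivity) (by positivity))
    (fun m n hm hmn =>
      Real.logb_le_logb_of_le one_lt_two (by positivity) (by exact_mod_cast hmn))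
    (by simp) hn
  have hg := natLog_le_mul_le_of_map_mul hmul hmono h2 hn
  by_contra hne
  have hpos : 0 < |g n - Real.logb 2 n| := abs_pos.2 (sub_ne_zero.2 hne)
  obtain ⟨k, hk⟩ := exists_nat_gt (1 / |g n - Real.logb 2 n|)
  have hk' : 1 < k * |g n - Real.logb 2 n| := by rwa [div_lt_iff₀ hpos] at hk
  have hbound : |k * g n - k * Real.logb 2 n| ≤ 1 := by
    obtain ⟨h1, h2⟩ := hg k
    obtain ⟨h3, h4⟩ := hlogb k
    rw [abs_le]
    constructor <;> linarith
  rw [← mul_sub, abs_mul, Nat.abs_cast] at hbound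
  linarith

end LogbCharacterization

namespace IsRelativeEntropy

variable {D : (n : ℕ) → (Fin n → ℝ) → (Fin n → ℝ) → ℝ≥0∞} {n m : ℕ}

lemma apply_self (hD : IsRelativeEntropy D) {r : Fin n → ℝ} (hr : IsProbVec r) :
    D n r r = 0 := by
  have he : IsProbVec (![1, 0] : Fin 2 → ℝ) := ⟨fun i => by fin_cases i <;> simp, by simp⟩
  have hu : IsProbVec (![1/2, 1/2] : Fin 2 → ℝ) :=
    ⟨fun i => by fin_cases i <;> simp, by norm_num⟩
  have hu₁ := isProbVec_uniform one_pos
  have hfin : D 1 (uniform 1) (uniform 1) ≠ ⊤ :=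
    ne_top_of_le_ne_top (hD.normalized ▸ ENNReal.ofReal_ne_top)
      (hD.dpi _ _ _ _ he hu hu₁ hu₁ (relMaj_const he hu hu₁))
  have hadd := hD.additive _ _ _ _ hu₁ hu₁ hu₁ hu₁
  rw [kron_uniform] at hadd
  have hzero : D 1 (uniform 1) (uniform 1) = 0 :=
    ((ENNReal.add_right_inj hfin).1 (by rw [add_zero]; exact hadd)).symm
  exact le_antisymm (hzero ▸ hD.dpi _ _ _ _ hu₁ hu₁ hr hr (relMaj_const hu₁ hu₁ hr)) zero_le

lemma apply_e₁_uniform_mul (hD : IsRelativeEntropy D) (hn : 0 < n) (hm : 0 < m) :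
    D (n * m) (e₁ (n * m)) (uniform (n * m)) =
      D n (e₁ n) (uniform n) + D m (e₁ m) (uniform m) := by
  rw [← kron_e₁, ← kron_uniform]
  exact hD.additive _ _ _ _ (isProbVec_e₁ hn) (isProbVec_uniform hn) (isProbVec_e₁ hm)
    (isProbVec_uniform hm)

lemma apply_e₁_uniform_two (hD : IsRelativeEntropy D) : D 2 (e₁ 2) (uniform 2) = 1 := by
  have he : e₁ 2 = ![1, 0] := by ext i; fin_cases i <;> simp [e₁]
  have hu : uniform 2 = ![1/2, 1/2] := by ext i; fin_cases i <;> norm_num [uniform]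
  rw [he, hu, hD.normalized, Real.logb_self_eq_one one_lt_two, ENNReal.ofReal_one]

lemma apply_e₁_uniform_mono (hD : IsRelativeEntropy D) (hn : 0 < n) (hnm : n ≤ m) :
    D n (e₁ n) (uniform n) ≤ D m (e₁ m) (uniform m) := by
  rcases hnm.eq_or_lt with rfl | hlt
  · exact le_rfl
  have hrm (j : Fin n) : e₁ n j ≤ m / n := by
    refine (isProbVec_e₁ hn).le_one j |>.trans ?_
    rw [one_le_div (by positivity)]
    exact_mod_cast hnm
  exact hD.dpi _ _ _ _ (isProbVec_e₁ (hn.trans hlt)) (isProbVec_uniform (hn.trans hlt))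
    (isProbVec_e₁ hn) (isProbVec_uniform hn)
    (relMaj_e₁_uniform (by omega) (isProbVec_e₁ hn) hrm)

lemma apply_e₁_uniform_ne_top (hD : IsRelativeEntropy D) (hn : 0 < n) :
    D n (e₁ n) (uniform n) ≠ ⊤ := by
  have hpow (k : ℕ) : D (2 ^ k) (e₁ (2 ^ k)) (uniform (2 ^ k)) = k := by
    induction k with
    | zero => simpa [e₁_one] using hD.apply_self (isProbVec_uniform one_pos)
    | succ k ih =>
      rw [pow_succ, hD.apply_e₁_uniform_mul (pow_pos two_pos k) two_pos, ih,
        hD.apply_e₁_uniform_two, Nat.cast_succ]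
  refine ne_top_of_le_ne_top (ENNReal.natCast_ne_top n) ?_
  exact hpow n ▸ hD.apply_e₁_uniform_mono hn Nat.lt_two_pow_self.le

lemma apply_e₁_uniform (hD : IsRelativeEntropy D) (hn : 0 < n) :
    D n (e₁ n) (uniform n) = ENNReal.ofReal (Real.logb 2 n) := by
  rw [← ENNReal.ofReal_toReal (hD.apply_e₁_uniform_ne_top hn)]
  congr 1
  refine eq_logb_of_map_mul (g := fun n => (D n (e₁ n) (uniform n)).toReal)
    (fun m n hm hn => ?_) (fun m n hm hmn => ?_) (by simp [hD.apply_e₁_uniform_two]) hn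
  · simp only [hD.apply_e₁_uniform_mul hm hn,
      ENNReal.toReal_add (hD.apply_e₁_uniform_ne_top hm) (hD.apply_e₁_uniform_ne_top hn)]
  · exact ENNReal.toReal_mono (hD.apply_e₁_uniform_ne_top (hm.trans_le hmn))
      (hD.apply_e₁_uniform_mono hm hmn)

lemma apply_uniform_le (hD : IsRelativeEntropy D) {p : Fin n → ℝ} (hp : IsProbVec p) :
    D n p (uniform n) ≤ ENNReal.ofReal (Real.logb 2 n) := by
  have hn := hp.pos
  rw [← hD.apply_e₁_uniform hn]
  by_cases hn2 : 2 ≤ n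
  · have hrm (j : Fin n) : p j ≤ n / n := by
      rw [div_self (by positivity)]
      exact hp.le_one j
    exact hD.dpi _ _ _ _ (isProbVec_e₁ hn) (isProbVec_uniform hn) hp (isProbVec_uniform hn)
      (relMaj_e₁_uniform hn2 hp hrm)
  · obtain rfl : n = 1 := by omega
    have hp₁ : p = uniform 1 := by
      ext i
      simpa [Fin.fin_one_eq_zero i, uniform] using hp.2
    rw [hp₁, hD.apply_self (isProbVec_uniform one_pos)]
    exact zero_le

lemma apply_uniform_ne_top (hD : IsRelativeEntropy D) {p : Fin n → ℝ} (hp : IsProbVec p) :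
    D n p (uniform n) ≠ ⊤ :=
  ne_top_of_le_ne_top ENNReal.ofReal_ne_top (hD.apply_uniform_le hp)

lemma apply_uniform_add_logb_le (hD : IsRelativeEntropy D) {p : Fin n → ℝ} {p' : Fin m → ℝ}
    (hp : IsProbVec p) (hp' : IsProbVec p') (hpp' : Majorizes p p') :
    D m p' (uniform m) + ENNReal.ofReal (Real.logb 2 n) ≤
      D n p (uniform n) + ENNReal.ofReal (Real.logb 2 m) := by
  have hn := hp.pos
  have hm := hp'.pos
  have ha := isProbVec_kron hp (isProbVec_e₁ hm)
  have hb := isProbVec_kron (isProbVec_e₁ hn) hp'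
  obtain ⟨W, hW, hWab⟩ := exists_mem_doublyStochastic_vecMul_eq ha.1 (hb.2.trans ha.2.symm)
    fun k => by rw [maxPartialSum_kron_e₁ p hm, maxPartialSum_e₁_kron p' hn]; exact hpp' k
  have hdpi := hD.dpi _ _ _ _ ha (isProbVec_uniform (Nat.mul_pos hn hm)) hb
    (isProbVec_uniform (Nat.mul_pos hn hm)) (hWab ▸ relMaj_uniform_of_mem_doublyStochastic hW)
  rwa [← kron_uniform, hD.additive _ _ _ _ hp (isProbVec_uniform hn) (isProbVec_e₁ hm)
    (isProbVec_uniform hm), hD.additive _ _ _ _ (isProbVec_e₁ hn) (isProbVec_uniform hn) hp'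
    (isProbVec_uniform hm), hD.apply_e₁_uniform hn, hD.apply_e₁_uniform hm, add_comm] at hdpi

end IsRelativeEntropy

/-- for a relative entropy `𝔻`, the function
`H(p) := log n − 𝔻(p‖uₙ)` (binary logarithm) is an entropy. -/
theorem stmt8 (D : (n : ℕ) → (Fin n → ℝ) → (Fin n → ℝ) → ℝ≥0∞)
    (hD : IsRelativeEntropy D) :
    IsEntropy (fun n p => Real.logb 2 n - (D n p (uniform n)).toReal) := by
  have hlogb_nonneg {n : ℕ} (hn : 0 < n) : 0 ≤ Real.logb 2 n :=
    Real.logb_nonneg one_lt_two (by exact_mod_cast hn)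
  refine ⟨fun p hp => ?_, fun p p' hp hp' hpp' => ?_, fun p q hp hq => ?_, ?_⟩
  · exact sub_nonneg.2
      (ENNReal.toReal_le_of_le_ofReal (hlogb_nonneg hp.pos) (hD.apply_uniform_le hp))
  · have h := ENNReal.toReal_mono
      (ENNReal.add_ne_top.2 ⟨hD.apply_uniform_ne_top hp, ENNReal.ofReal_ne_top⟩)
      (hD.apply_uniform_add_logb_le hp hp' hpp')
    rw [ENNReal.toReal_add (hD.apply_uniform_ne_top hp) ENNReal.ofReal_ne_top,
      ENNReal.toReal_add (hD.apply_uniform_ne_top hp') ENNReal.ofReal_ne_top,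
      ENNReal.toReal_ofReal (hlogb_nonneg hp.pos),
      ENNReal.toReal_ofReal (hlogb_nonneg hp'.pos)] at h
    linarith
  · have hn := hp.pos
    have hm := hq.pos
    rw [← kron_uniform, hD.additive _ _ _ _ hp (isProbVec_uniform hn) hq (isProbVec_uniform hm),
      ENNReal.toReal_add (hD.apply_uniform_ne_top hp) (hD.apply_uniform_ne_top hq), Nat.cast_mul,
      Real.logb_mul (by positivity) (by positivity)]
    ring
  · simp [hD.apply_self (isProbVec_uniform two_pos)]
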